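/- arXiv:2108.13188 — 2 statements merged into one kernel-verified Lean document; each statement's English description precedes it below -/
import Mathlib

section
/- Let X be a real Banach space, 1 < α ≤ 2, M ≥ 1, ω ≥ 0. Let T, B, S₀ : [0,∞) → L(X) be strongly continuous with ‖T(t)‖ ≤ M·e^(ωt)·t^(α−1)/Γ(α) and ‖S₀(t)‖ ≤ M·t·e^(ωt) for all t ≥ 0. Define recursively S_{n+1}(t)x = ∫₀ᵗ T(t−s) B(s) S_n(s)x ds. Then for every n ∈ ℕ and t ≥ 0, setting K_t = sup_{0≤s≤t} ‖B(s)‖, one has ‖S_n(t)x‖ ≤ M^(n+1) · K_t^n · e^(ωt) · (t^(nα+1)/Γ(nα+2)) · ‖x‖ for all x ∈ X. -/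
/-!
Write `g_β(t) = t^(β-1)/Γ(β)` (`rlKernel β t`). The hypotheses say `‖T(t)‖ ≤ M e^(ωt) g_α(t)` and
`‖S₀(t)‖ ≤ M e^(ωt) g_2(t)`, and the Beta integral gives the semigroup law `g_a ∗ g_b = g_(a+b)`
for the convolution on `[0, t]`. Since `e^(ω(t-s)) e^(ωs) = e^(ωt)`, each step of the recursion
multiplies the bound by `M K` and raises the index of `g` by `α`, so by induction
`‖S_n(s)‖ ≤ M^(n+1) K^n e^(ωs) g_(nα+2)(s)` for `s ≤ t`, whenever `K` bounds `‖B‖` on `[0, t]`.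
By the uniform boundedness principle `K_t` is such a bound.
-/

open MeasureTheory Set intervalIntegral

theorem intervalIntegral_sub_rpow_mul_rpow {a b t : ℝ} (ha : 0 < a) (hb : 0 < b) (ht : 0 < t) :
    ∫ s in (0:ℝ)..t, (t - s) ^ (a - 1) * s ^ (b - 1) =
      Real.Gamma a * Real.Gamma b / Real.Gamma (a + b) * t ^ (a + b - 1) := by
  have hbeta :
      Complex.betaIntegral b a = (Real.Gamma a * Real.Gamma b / Real.Gamma (a + b) : ℝ) := by
    have hne : ((Real.Gamma (a + b) : ℝ) : ℂ) ≠ 0 := by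
      exact_mod_cast (Real.Gamma_pos_of_pos (add_pos ha hb)).ne'
    have hGG := Complex.Gamma_mul_Gamma_eq_betaIntegral (s := (b : ℂ)) (t := (a : ℂ))
      (by simpa using hb) (by simpa using ha)
    rw [← Complex.ofReal_add, Complex.Gamma_ofReal, Complex.Gamma_ofReal, Complex.Gamma_ofReal,
      add_comm b] at hGG
    rw [Complex.ofReal_div, Complex.ofReal_mul, eq_div_iff hne]
    linear_combination -hGG
  have hint : ((∫ s in (0:ℝ)..t, (t - s) ^ (a - 1) * s ^ (b - 1) : ℝ) : ℂ)
      = ∫ s in (0:ℝ)..t, (s : ℂ) ^ ((b : ℂ) - 1) * ((t : ℂ) - s) ^ ((a : ℂ) - 1) := by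
    rw [← intervalIntegral.integral_ofReal, integral_of_le ht.le, integral_of_le ht.le]
    refine setIntegral_congr_fun measurableSet_Ioc fun s hs => ?_
    rw [Complex.ofReal_mul, Complex.ofReal_cpow (sub_nonneg.2 hs.2), Complex.ofReal_cpow hs.1.le]
    push_cast
    ring
  have htpow : (t : ℂ) ^ ((b : ℂ) + a - 1) = ((t ^ (a + b - 1) : ℝ) : ℂ) := by
    rw [Complex.ofReal_cpow ht.le]
    push_cast
    ring_nf
  have := hint.trans ((Complex.betaIntegral_scaled b a ht).trans
    (by rw [hbeta, htpow, ← Complex.ofReal_mul, mul_comm]))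
  exact_mod_cast this

noncomputable def rlKernel (β t : ℝ) : ℝ := t ^ (β - 1) / Real.Gamma β

theorem rlKernel_zero_right {β : ℝ} (hβ : 1 < β) : rlKernel β 0 = 0 := by
  rw [rlKernel, Real.zero_rpow (sub_ne_zero.2 hβ.ne'), zero_div]

theorem intervalIntegral_rlKernel_sub_mul_rlKernel {a b t : ℝ} (ha : 0 < a) (hb : 0 < b)
    (ht : 0 < t) : ∫ s in (0:ℝ)..t, rlKernel a (t - s) * rlKernel b s = rlKernel (a + b) t := by
  have hΓa := (Real.Gamma_pos_of_pos ha).ne'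
  have hΓb := (Real.Gamma_pos_of_pos hb).ne'
  simp only [rlKernel, div_mul_div_comm, intervalIntegral.integral_div,
    intervalIntegral_sub_rpow_mul_rpow ha hb ht]
  field_simp

theorem intervalIntegrable_rlKernel_sub_mul_rlKernel {a b t : ℝ} (ha : 0 < a) (hb : 0 < b)
    (ht : 0 < t) : IntervalIntegrable (fun s => rlKernel a (t - s) * rlKernel b s) volume 0 t := by
  refine intervalIntegrable_of_integral_ne_zero ?_
  rw [intervalIntegral_rlKernel_sub_mul_rlKernel ha hb ht]
  exact (div_pos (Real.rpow_pos_of_pos ht _) (Real.Gamma_pos_of_pos (add_pos ha hb))).ne'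

theorem norm_intervalIntegral_le_of_norm_le_rlKernel_conv {X : Type*} [NormedAddCommGroup X]
    [NormedSpace ℝ X] {F : ℝ → X} {a b c t : ℝ} (ha : 0 < a) (hb : 0 < b) (ht : 0 < t)
    (hF : ∀ s ∈ Ioc 0 t, ‖F s‖ ≤ c * (rlKernel a (t - s) * rlKernel b s)) :
    ‖∫ s in (0:ℝ)..t, F s‖ ≤ c * rlKernel (a + b) t := by
  rw [← intervalIntegral_rlKernel_sub_mul_rlKernel ha hb ht, ← intervalIntegral.integral_const_mul]
  exact norm_integral_le_of_norm_le ht.le (Filter.Eventually.of_forall hF)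
    ((intervalIntegrable_rlKernel_sub_mul_rlKernel ha hb ht).const_mul c)

theorem IsCompact.bddAbove_image_norm_of_continuousOn_apply {ι E F : Type*} [TopologicalSpace ι]
    [NormedAddCommGroup E] [NormedSpace ℝ E] [CompleteSpace E]
    [NormedAddCommGroup F] [NormedSpace ℝ F]
    {K : Set ι} (hK : IsCompact K) {B : ι → E →L[ℝ] F}
    (hB : ∀ x, ContinuousOn (fun i => B i x) K) : BddAbove ((fun i => ‖B i‖) '' K) := by
  obtain ⟨C, hC⟩ := banach_steinhaus (g := fun i : K => B i) fun x => by
    obtain ⟨C, hC⟩ := (hK.image_of_continuousOn (hB x).norm).bddAbove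
    exact ⟨C, fun i => hC (mem_image_of_mem _ i.2)⟩
  exact ⟨C, by rintro _ ⟨i, hi, rfl⟩; exact hC ⟨i, hi⟩⟩

theorem norm_perturbation_iterate_le {X : Type*} [NormedAddCommGroup X] [NormedSpace ℝ X]
    {T B : ℝ → X →L[ℝ] X} {S : ℕ → ℝ → X →L[ℝ] X} {α M ω K t : ℝ} (hα : 0 < α)
    (hT : ∀ r, 0 ≤ r → ‖T r‖ ≤ M * Real.exp (ω * r) * rlKernel α r)
    (hS0 : ∀ r, 0 ≤ r → ‖S 0 r‖ ≤ M * Real.exp (ω * r) * rlKernel 2 r)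
    (hB : ∀ s ∈ Icc 0 t, ‖B s‖ ≤ K)
    (hrec : ∀ n s x, S (n + 1) s x = ∫ r in (0:ℝ)..s, T (s - r) (B r (S n r x)))
    (n : ℕ) (x : X) {s : ℝ} (hs : s ∈ Icc 0 t) :
    ‖S n s x‖ ≤ M ^ (n + 1) * K ^ n * Real.exp (ω * s) * rlKernel (n * α + 2) s * ‖x‖ := by
  induction n generalizing s with
  | zero =>
    simpa [mul_assoc] using (S 0 s).le_of_opNorm_le (hS0 s hs.1) x
  | succ n ih =>
    rw [hrec]
    obtain rfl | hspos := hs.1.eq_or_lt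
    · rw [integral_same, norm_zero,
        rlKernel_zero_right (lt_add_of_nonneg_of_lt (by positivity) one_lt_two), mul_zero, zero_mul]
    have hbound : ∀ r ∈ Ioc 0 s, ‖T (s - r) (B r (S n r x))‖ ≤
        M ^ (n + 2) * K ^ (n + 1) * Real.exp (ω * s) * ‖x‖ *
          (rlKernel α (s - r) * rlKernel (n * α + 2) r) := by
      intro r hr
      have hrt : r ∈ Icc 0 t := ⟨hr.1.le, hr.2.trans hs.2⟩
      have hK : 0 ≤ K := (norm_nonneg _).trans (hB r hrt)
      have hTr := hT (s - r) (sub_nonneg.2 hr.2)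
      calc ‖T (s - r) (B r (S n r x))‖ ≤ ‖T (s - r)‖ * (‖B r‖ * ‖S n r x‖) :=
            (T _).le_opNorm_of_le ((B r).le_opNorm _)
        _ ≤ (M * Real.exp (ω * (s - r)) * rlKernel α (s - r)) *
            (K * (M ^ (n + 1) * K ^ n * Real.exp (ω * r) * rlKernel (n * α + 2) r * ‖x‖)) := by
          gcongr
          · exact (norm_nonneg _).trans hTr
          · exact hB r hrt
          · exact ih hrt
        _ = _ := by
          rw [show ω * s = ω * (s - r) + ω * r by ring, Real.exp_add]
          ring
    have := norm_intervalIntegral_le_of_norm_le_rlKernel_conv hα (by positivity) hspos hbound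
    rw [show α + (n * α + 2) = ((n + 1 : ℕ) : ℝ) * α + 2 by push_cast; ring] at this
    exact this.trans_eq (by ring)

theorem sine_iterate_bound_general {X : Type*} [NormedAddCommGroup X] [NormedSpace ℝ X]
    [CompleteSpace X] (α M ω : ℝ) (hα1 : 1 < α)
    (T B : ℝ → X →L[ℝ] X) (S : ℕ → ℝ → X →L[ℝ] X)
    (hBcont : ∀ x : X, ContinuousOn (fun t => B t x) (Set.Ici 0))
    (hTbd : ∀ t : ℝ, 0 ≤ t → ‖T t‖ ≤ M * Real.exp (ω * t) * t ^ (α - 1) / Real.Gamma α)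
    (hS0bd : ∀ t : ℝ, 0 ≤ t → ‖S 0 t‖ ≤ M * t * Real.exp (ω * t))
    (hrec : ∀ (n : ℕ) (t : ℝ) (x : X),
      S (n + 1) t x = ∫ s in (0:ℝ)..t, T (t - s) (B s (S n s x)))
    (n : ℕ) (t : ℝ) (ht : 0 ≤ t) (x : X) :
    ‖S n t x‖ ≤ M ^ (n + 1) * (sSup ((fun s => ‖B s‖) '' Set.Icc 0 t)) ^ n *
      Real.exp (ω * t) * (t ^ ((n : ℝ) * α + 1) / Real.Gamma ((n : ℝ) * α + 2)) * ‖x‖ := by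
  have hBbdd : BddAbove ((fun s => ‖B s‖) '' Icc 0 t) :=
    isCompact_Icc.bddAbove_image_norm_of_continuousOn_apply fun y =>
      (hBcont y).mono Icc_subset_Ici_self
  have hT : ∀ r, 0 ≤ r → ‖T r‖ ≤ M * Real.exp (ω * r) * rlKernel α r := fun r hr => by
    simpa only [rlKernel, mul_div_assoc] using hTbd r hr
  have hS0 : ∀ r, 0 ≤ r → ‖S 0 r‖ ≤ M * Real.exp (ω * r) * rlKernel 2 r := fun r hr => by
    simpa only [rlKernel, Real.Gamma_two, div_one, show (2:ℝ) - 1 = 1 by norm_num, Real.rpow_one,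
      mul_right_comm M r] using hS0bd r hr
  have := norm_perturbation_iterate_le (by linarith) hT hS0
    (fun s hs => le_csSup hBbdd (mem_image_of_mem _ hs)) hrec n x ⟨ht, le_rfl⟩
  rwa [rlKernel, show (n : ℝ) * α + 2 - 1 = n * α + 1 by ring] at this

/-- Bound on the perturbation iterates of the fractional sine family:
`‖S_n(t)x‖ ≤ M^{n+1} K_t^n e^{ωt} (t^{nα+1}/Γ(nα+2)) ‖x‖`. -/
theorem sine_iterate_bound {X : Type*} [NormedAddCommGroup X] [NormedSpace ℝ X]
    [CompleteSpace X] (α M ω : ℝ) (hα1 : 1 < α) (hα2 : α ≤ 2) (hM : 1 ≤ M) (hω : 0 ≤ ω)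
    (T B : ℝ → X →L[ℝ] X) (S : ℕ → ℝ → X →L[ℝ] X)
    (hTcont : ∀ x : X, ContinuousOn (fun t => T t x) (Set.Ici 0))
    (hBcont : ∀ x : X, ContinuousOn (fun t => B t x) (Set.Ici 0))
    (hS0cont : ∀ x : X, ContinuousOn (fun t => S 0 t x) (Set.Ici 0))
    (hTbd : ∀ t : ℝ, 0 ≤ t → ‖T t‖ ≤ M * Real.exp (ω * t) * t ^ (α - 1) / Real.Gamma α)
    (hS0bd : ∀ t : ℝ, 0 ≤ t → ‖S 0 t‖ ≤ M * t * Real.exp (ω * t))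
    (hrec : ∀ (n : ℕ) (t : ℝ) (x : X),
      S (n + 1) t x = ∫ s in (0:ℝ)..t, T (t - s) (B s (S n s x)))
    (n : ℕ) (t : ℝ) (ht : 0 ≤ t) (x : X) :
    ‖S n t x‖ ≤ M ^ (n + 1) * (sSup ((fun s => ‖B s‖) '' Set.Icc 0 t)) ^ n *
      Real.exp (ω * t) * (t ^ ((n : ℝ) * α + 1) / Real.Gamma ((n : ℝ) * α + 2)) * ‖x‖ :=
  sine_iterate_bound_general α M ω hα1 T B S hBcont hTbd hS0bd hrec n t ht x
end

section
/- Under the hypotheses of the cosine-iterate bounds (T, B, C₀ strongly continuous, ‖T(t)‖ ≤ M e^(ωt) t^(α−1)/Γ(α), ‖C₀(t)‖ ≤ M e^(ωt), C_{n+1}(t)x = ∫₀ᵗ T(t−s)B(s)C_n(s)x ds, 1 < α ≤ 2, M ≥ 1, ω ≥ 0), for every t ≥ 0 and x ∈ X the series Σ_{n=0}^∞ C_n(t)x converges absolutely in X, and its sum C(t)x satisfies ‖C(t)x‖ ≤ M · e^(ωt) · E_α(M·K_t·t^α) · ‖x‖, where K_t = sup_{0≤s≤t} ‖B(s)‖.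 -/
/-!
By induction, `‖C_n(s)x‖ ≤ M e^{ωs} (M K s^α)^n / Γ(nα+1) ‖x‖` for `0 ≤ s ≤ t`: inserting the
bound for `C_n` into the recursion, the exponentials combine to `e^{ωs}` and what is left is the
Beta integral `∫₀ˢ u^{nα} (s-u)^{α-1} du = Γ(nα+1) Γ(α) / Γ((n+1)α+1) · s^{(n+1)α}`.
The constant `K` is finite by the uniform boundedness principle, and the resulting majorant is
the Mittag-Leffler series, which converges because `k! ≤ Γ(kα+1)` for `α ≥ 1`.
-/

open MeasureTheory intervalIntegral Set
open scoped Nat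

theorem integral_rpow_mul_sub_rpow {a b s : ℝ} (ha : 0 < a) (hb : 0 < b) (hs : 0 < s) :
    ∫ u in (0:ℝ)..s, u ^ (a - 1) * (s - u) ^ (b - 1) =
      Real.Gamma a * Real.Gamma b / Real.Gamma (a + b) * s ^ (a + b - 1) := by
  have hbeta := Complex.betaIntegral_scaled a b hs
  rw [Complex.betaIntegral_eq_Gamma_mul_div _ _ (by simpa using ha) (by simpa using hb)] at hbeta
  have hreal : ∫ u in (0:ℝ)..s, (u : ℂ) ^ ((a : ℂ) - 1) * ((s : ℂ) - u) ^ ((b : ℂ) - 1)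
      = ((∫ u in (0:ℝ)..s, u ^ (a - 1) * (s - u) ^ (b - 1) : ℝ) : ℂ) := by
    rw [← intervalIntegral.integral_ofReal]
    refine intervalIntegral.integral_congr fun u hu => ?_
    rw [uIcc_of_le hs.le] at hu
    push_cast
    rw [Complex.ofReal_cpow hu.1, Complex.ofReal_cpow (sub_nonneg.2 hu.2)]
    push_cast
    ring
  have hpow : (s : ℂ) ^ ((a : ℂ) + b - 1) = ((s ^ (a + b - 1) : ℝ) : ℂ) := by
    rw [Complex.ofReal_cpow hs.le]; push_cast; ring_nf
  rw [hreal, hpow] at hbeta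
  simpa [← Complex.ofReal_mul, ← Complex.ofReal_div, Complex.Gamma_ofReal,
    ← Complex.ofReal_add, mul_comm] using congrArg Complex.re hbeta

theorem norm_integral_le_of_norm_le_rpow_mul_rpow {E : Type*} [NormedAddCommGroup E]
    [NormedSpace ℝ E] {f : ℝ → E} {a b s D : ℝ} (ha : 0 ≤ a) (hb : 1 ≤ b) (hs : 0 ≤ s)
    (hf : ∀ u ∈ Ioc 0 s, ‖f u‖ ≤ D * (u ^ a * (s - u) ^ (b - 1))) :
    ‖∫ u in (0:ℝ)..s, f u‖ ≤
      D * (Real.Gamma (a + 1) * Real.Gamma b / Real.Gamma (a + 1 + b)) * s ^ (a + b) := by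
  rcases hs.eq_or_lt with rfl | hs
  · rw [integral_same, norm_zero, Real.zero_rpow (by linarith), mul_zero]
  have hint : IntervalIntegrable (fun u => D * (u ^ a * (s - u) ^ (b - 1))) volume 0 s :=
    (continuous_const.mul ((Real.continuous_rpow_const ha).mul
      ((Real.continuous_rpow_const (by linarith)).comp (continuous_sub_left s)))).intervalIntegrable
      _ _
  calc ‖∫ u in (0:ℝ)..s, f u‖
      ≤ ∫ u in (0:ℝ)..s, D * (u ^ a * (s - u) ^ (b - 1)) :=
        norm_integral_le_of_norm_le hs.le (ae_of_all _ hf) hint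
    _ = _ := by
        rw [intervalIntegral.integral_const_mul, ← add_sub_cancel_right a 1,
          integral_rpow_mul_sub_rpow (by linarith) (by linarith) hs]
        ring_nf

theorem Nat.factorial_le_Gamma_mul_add_one {α : ℝ} (hα : 1 ≤ α) (k : ℕ) :
    (k ! : ℝ) ≤ Real.Gamma (k * α + 1) := by
  rcases k.eq_zero_or_pos with rfl | hk
  · simp
  have hk : (1 : ℝ) ≤ k := by exact_mod_cast hk
  rw [← Real.Gamma_nat_eq_factorial]
  exact Real.Gamma_strictMonoOn_Ici.monotoneOn (by simp; linarith) (by simp; nlinarith)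
    (by nlinarith)

theorem summable_pow_div_Gamma_mul_add_one {α : ℝ} (hα : 1 ≤ α) (z : ℝ) :
    Summable fun k : ℕ => z ^ k / Real.Gamma (k * α + 1) := by
  refine .of_norm_bounded (Real.summable_pow_div_factorial |z|) fun k => ?_
  have hΓ : 0 < Real.Gamma (k * α + 1) := Real.Gamma_pos_of_pos (by positivity)
  rw [norm_div, norm_pow, Real.norm_eq_abs, Real.norm_of_nonneg hΓ.le]
  exact div_le_div_of_nonneg_left (by positivity) (by positivity)
    (Nat.factorial_le_Gamma_mul_add_one hα k)

theorem IsCompact.bddAbove_image_opNorm_of_continuousOn_apply {𝕜 E F Y : Type*}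
    [NontriviallyNormedField 𝕜] [NormedAddCommGroup E] [NormedSpace 𝕜 E] [CompleteSpace E]
    [NormedAddCommGroup F] [NormedSpace 𝕜 F] [TopologicalSpace Y] {S : Set Y}
    (hS : IsCompact S) {B : Y → E →L[𝕜] F} (hB : ∀ x, ContinuousOn (fun y => B y x) S) :
    BddAbove ((fun y => ‖B y‖) '' S) := by
  obtain ⟨K, hK⟩ := banach_steinhaus (g := fun y : S => B y) fun x => by
    obtain ⟨K, hK⟩ := hS.exists_bound_of_continuousOn (hB x)
    exact ⟨K, fun y => hK y y.2⟩
  exact ⟨K, by rintro _ ⟨y, hy, rfl⟩; exact hK ⟨y, hy⟩⟩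

theorem mul_rpow_pow {c s : ℝ} (hs : 0 ≤ s) (α : ℝ) (n : ℕ) :
    (c * s ^ α) ^ n = c ^ n * s ^ (n * α) := by
  rw [mul_pow, mul_comm (n : ℝ), Real.rpow_mul_natCast hs]

section CosineIterates

variable {X : Type*} [NormedAddCommGroup X] [NormedSpace ℝ X]
  {T B : ℝ → X →L[ℝ] X} {C : ℕ → ℝ → X →L[ℝ] X} {α M ω K t : ℝ}

theorem norm_cosineIterate_le (hα : 1 ≤ α) (hM : 0 ≤ M)
    (hTbd : ∀ t : ℝ, 0 ≤ t → ‖T t‖ ≤ M * Real.exp (ω * t) * t ^ (α - 1) / Real.Gamma α)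
    (hC0bd : ∀ t : ℝ, 0 ≤ t → ‖C 0 t‖ ≤ M * Real.exp (ω * t))
    (hrec : ∀ (n : ℕ) (t : ℝ) (x : X),
      C (n + 1) t x = ∫ s in (0:ℝ)..t, T (t - s) (B s (C n s x)))
    (hB : ∀ u ∈ Icc 0 t, ‖B u‖ ≤ K) (n : ℕ) {s : ℝ} (hs : s ∈ Icc 0 t) (x : X) :
    ‖C n s x‖ ≤ M * Real.exp (ω * s) * ((M * K * s ^ α) ^ n / Real.Gamma (n * α + 1)) * ‖x‖ := by
  induction n generalizing s with
  | zero =>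
    simpa using (C 0 s).le_of_opNorm_le (hC0bd s hs.1) x
  | succ n ih =>
    set D := M * Real.exp (ω * s) * (M * K) ^ (n + 1) * ‖x‖ /
      (Real.Gamma α * Real.Gamma (n * α + 1)) with hD
    have hpoint : ∀ u ∈ Ioc 0 s,
        ‖T (s - u) (B u (C n u x))‖ ≤ D * (u ^ (n * α) * (s - u) ^ (α - 1)) := by
      rintro u ⟨hu0, hus⟩
      have hut : u ∈ Icc 0 t := ⟨hu0.le, hus.trans hs.2⟩
      have hK : 0 ≤ K := (norm_nonneg _).trans (hB u hut)
      have hexp : Real.exp (ω * (s - u)) * Real.exp (ω * u) = Real.exp (ω * s) := by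
        rw [← Real.exp_add]; ring_nf
      calc ‖T (s - u) (B u (C n u x))‖
          ≤ ‖T (s - u)‖ * (‖B u‖ * ‖C n u x‖) :=
            (T (s - u)).le_opNorm_of_le ((B u).le_opNorm _)
        _ ≤ (M * Real.exp (ω * (s - u)) * (s - u) ^ (α - 1) / Real.Gamma α) *
            (K * (M * Real.exp (ω * u) * ((M * K * u ^ α) ^ n / Real.Gamma (n * α + 1)) * ‖x‖)) := by
            gcongr
            · exact hTbd _ (sub_nonneg.2 hus)
            · exact hB u hut
            · exact ih hut
        _ = D * (u ^ (n * α) * (s - u) ^ (α - 1)) := by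
            rw [mul_rpow_pow hu0.le, hD, ← hexp]
            field_simp
            ring
    rw [hrec]
    refine (norm_integral_le_of_norm_le_rpow_mul_rpow (by positivity) hα hs.1 hpoint).trans_eq ?_
    rw [mul_rpow_pow hs.1, show n * α + 1 + α = (n + 1 : ℕ) * α + 1 by push_cast; ring,
      show n * α + α = (n + 1 : ℕ) * α by push_cast; ring, hD]
    field_simp

end CosineIterates

theorem perturbed_cosine_series_bound_general {X : Type*} [NormedAddCommGroup X] [NormedSpace ℝ X]
    [CompleteSpace X] (α M ω : ℝ) (hα1 : 1 < α) (hM : 1 ≤ M)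
    (T B : ℝ → X →L[ℝ] X) (C : ℕ → ℝ → X →L[ℝ] X)
    (hBcont : ∀ x : X, ContinuousOn (fun t => B t x) (Set.Ici 0))
    (hTbd : ∀ t : ℝ, 0 ≤ t → ‖T t‖ ≤ M * Real.exp (ω * t) * t ^ (α - 1) / Real.Gamma α)
    (hC0bd : ∀ t : ℝ, 0 ≤ t → ‖C 0 t‖ ≤ M * Real.exp (ω * t))
    (hrec : ∀ (n : ℕ) (t : ℝ) (x : X),
      C (n + 1) t x = ∫ s in (0:ℝ)..t, T (t - s) (B s (C n s x)))
    (t : ℝ) (ht : 0 ≤ t) (x : X) :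
    Summable (fun n : ℕ => ‖C n t x‖) ∧
    ‖∑' n : ℕ, C n t x‖ ≤ M * Real.exp (ω * t) *
      (∑' k : ℕ, (M * (sSup ((fun s => ‖B s‖) '' Set.Icc 0 t)) * t ^ α) ^ k /
        Real.Gamma ((k : ℝ) * α + 1)) * ‖x‖ := by
  set K := sSup ((fun s => ‖B s‖) '' Icc 0 t)
  have hBdd := (isCompact_Icc (a := 0) (b := t)).bddAbove_image_opNorm_of_continuousOn_apply
    fun y => (hBcont y).mono Icc_subset_Ici_self
  have hbound (n : ℕ) : ‖C n t x‖ ≤ M * Real.exp (ω * t) * ‖x‖ *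
      ((M * K * t ^ α) ^ n / Real.Gamma (n * α + 1)) :=
    (norm_cosineIterate_le hα1.le (by linarith) hTbd hC0bd hrec
      (fun u hu => le_csSup hBdd ⟨u, hu, rfl⟩) n ⟨ht, le_rfl⟩ x).trans_eq (by ring)
  have hML := (summable_pow_div_Gamma_mul_add_one hα1.le (M * K * t ^ α)).mul_left
    (M * Real.exp (ω * t) * ‖x‖)
  have hsum : Summable fun n => ‖C n t x‖ := .of_nonneg_of_le (fun _ => norm_nonneg _) hbound hML
  refine ⟨hsum, ?_⟩
  calc ‖∑' n, C n t x‖ ≤ ∑' n, ‖C n t x‖ := norm_tsum_le_tsum_norm hsum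
    _ ≤ ∑' n : ℕ, M * Real.exp (ω * t) * ‖x‖ *
        ((M * K * t ^ α) ^ n / Real.Gamma (n * α + 1)) := hsum.tsum_le_tsum hbound hML
    _ = _ := by rw [tsum_mul_left]; ring

/-- The series `Σ C_n(t)x` defining the perturbed fractional cosine family converges
absolutely, and `‖C_α(t;A+B)x‖ ≤ M e^{ωt} E_α(M K_t t^α) ‖x‖`, where
`E_α(z) = Σ_k z^k/Γ(kα+1)` is the Mittag-Leffler function. -/
theorem perturbed_cosine_series_bound {X : Type*} [NormedAddCommGroup X] [NormedSpace ℝ X]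
    [CompleteSpace X] (α M ω : ℝ) (hα1 : 1 < α) (hα2 : α ≤ 2) (hM : 1 ≤ M) (hω : 0 ≤ ω)
    (T B : ℝ → X →L[ℝ] X) (C : ℕ → ℝ → X →L[ℝ] X)
    (hTcont : ∀ x : X, ContinuousOn (fun t => T t x) (Set.Ici 0))
    (hBcont : ∀ x : X, ContinuousOn (fun t => B t x) (Set.Ici 0))
    (hC0cont : ∀ x : X, ContinuousOn (fun t => C 0 t x) (Set.Ici 0))
    (hTbd : ∀ t : ℝ, 0 ≤ t → ‖T t‖ ≤ M * Real.exp (ω * t) * t ^ (α - 1) / Real.Gamma α)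
    (hC0bd : ∀ t : ℝ, 0 ≤ t → ‖C 0 t‖ ≤ M * Real.exp (ω * t))
    (hrec : ∀ (n : ℕ) (t : ℝ) (x : X),
      C (n + 1) t x = ∫ s in (0:ℝ)..t, T (t - s) (B s (C n s x)))
    (t : ℝ) (ht : 0 ≤ t) (x : X) :
    Summable (fun n : ℕ => ‖C n t x‖) ∧
    ‖∑' n : ℕ, C n t x‖ ≤ M * Real.exp (ω * t) *
      (∑' k : ℕ, (M * (sSup ((fun s => ‖B s‖) '' Set.Icc 0 t)) * t ^ α) ^ k /
        Real.Gamma ((k : ℝ) * α + 1)) * ‖x‖ :=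
  perturbed_cosine_series_bound_general α M ω hα1 hM T B C hBcont hTbd hC0bd hrec t ht x
end
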